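/- arXiv:1603.07815 — 3 statements merged into one kernel-verified Lean document; each statement's English description precedes it below -/
import Mathlib

section
/- Let P: G → K be a function between additive (abelian) groups, let H₁ and H₂ be subgroups of G, and let d₁, d₂ be integers. If P is a polynomial of degree <d₁ along H₁ and a polynomial of degree <d₂ along H₂, then P is a polynomial of degree <d₁+d₂−1 along the subgroup H₁+H₂. -/
/-!
Write `Δ_[h] P = P (· + h) - P`. For `h = h₁ + h₂` one has
`Δ_[h] P = Δ_[h₁] P (· + h₂) + Δ_[h₂] P`. Translating and differencing preserve the degree
along any subgroup, while `Δ_[h₁]` lowers the degree along `H₁` and `Δ_[h₂]` the degree along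
`H₂`; so both terms fall under an induction on `d₁ + d₂`.
-/

/-- `P : G → K` is a polynomial of degree `< d` along the subgroup `H`, for a natural
number `d`: for `d = 0` this means `P` is identically zero, and for `d ≥ 1` it means
that for every `h ∈ H` there is a polynomial `P_h` of degree `< d - 1` along `H` with
`P(x+h) = P(x) + P_h(x)` for all `x`. -/
def IsPolyDegNat {G K : Type*} [AddCommGroup G] [AddCommGroup K] (H : AddSubgroup G) :
    ℕ → (G → K) → Prop
  | 0, P => P = 0
  | d + 1, P => ∀ h ∈ H, ∃ Ph : G → K,
      IsPolyDegNat H d Ph ∧ ∀ x : G, P (x + h) = P x + Ph x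

/-- `P : G → K` is a polynomial of degree `< d` along the subgroup `H`, for an integer
`d`: if `d ≤ 0` this means `P` is identically zero; if `d ≥ 1` it means that for every
`h ∈ H` there is a polynomial `P_h` of degree `< d - 1` along `H` with
`P(x+h) = P(x) + P_h(x)` for all `x`. -/
def IsPolyDeg {G K : Type*} [AddCommGroup G] [AddCommGroup K] (H : AddSubgroup G)
    (d : ℤ) (P : G → K) : Prop :=
  if d ≤ 0 then P = 0 else IsPolyDegNat H d.toNat P

open fwdDiff

section fwdDiff

variable {M G : Type*} [AddCommMonoid M] [AddCommGroup G]

lemma fwdDiff_sub (h : M) (f g : M → G) : Δ_[h] (f - g) = Δ_[h] f - Δ_[h] g :=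
  funext fun _ ↦ sub_sub_sub_comm ..

lemma fwdDiff_add_eq_comp_add_add (h₁ h₂ : M) (f : M → G) :
    Δ_[h₁ + h₂] f = (fun y ↦ Δ_[h₁] f (y + h₂)) + Δ_[h₂] f := by
  funext y
  simp only [fwdDiff, Pi.add_apply, add_comm h₁, ← add_assoc]
  abel

end fwdDiff

namespace IsPolyDegNat

variable {G K : Type*} [AddCommGroup G] [AddCommGroup K] {H : AddSubgroup G}

theorem succ_iff {d : ℕ} {P : G → K} :
    IsPolyDegNat H (d + 1) P ↔ ∀ h ∈ H, IsPolyDegNat H d (Δ_[h] P) := by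
  rw [IsPolyDegNat]
  refine forall₂_congr fun h _ ↦ ⟨fun ⟨Ph, hPh, hP⟩ ↦ ?_, fun hP ↦ ⟨_, hP, fun x ↦ ?_⟩⟩
  · convert hPh
    funext x
    simp [fwdDiff, hP]
  · simp [fwdDiff]

theorem zero : ∀ d : ℕ, IsPolyDegNat H d (0 : G → K)
  | 0 => rfl
  | d + 1 => succ_iff.mpr fun h _ ↦ by
      rw [show Δ_[h] (0 : G → K) = 0 from funext fun _ ↦ sub_self 0]
      exact zero d

theorem add : ∀ {d : ℕ} {P Q : G → K}, IsPolyDegNat H d P → IsPolyDegNat H d Q →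
    IsPolyDegNat H d (P + Q)
  | 0, _, _, hP, hQ => by rw [hP, hQ, add_zero]; rfl
  | _ + 1, _, _, hP, hQ => succ_iff.mpr fun h hh ↦ by
      rw [fwdDiff_add]
      exact (succ_iff.mp hP h hh).add (succ_iff.mp hQ h hh)

theorem sub : ∀ {d : ℕ} {P Q : G → K}, IsPolyDegNat H d P → IsPolyDegNat H d Q →
    IsPolyDegNat H d (P - Q)
  | 0, _, _, hP, hQ => by rw [hP, hQ, sub_zero]; rfl
  | _ + 1, _, _, hP, hQ => succ_iff.mpr fun h hh ↦ by
      rw [fwdDiff_sub]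
      exact (succ_iff.mp hP h hh).sub (succ_iff.mp hQ h hh)

theorem comp_add_right (g : G) : ∀ {d : ℕ} {P : G → K}, IsPolyDegNat H d P →
    IsPolyDegNat H d (fun x ↦ P (x + g))
  | 0, _, hP => by rw [hP]; rfl
  | _ + 1, P, hP => succ_iff.mpr fun h hh ↦ by
      have hΔ : Δ_[h] (fun x ↦ P (x + g)) = fun x ↦ Δ_[h] P (x + g) :=
        funext (fwdDiff_comp_add h P g)
      rw [hΔ]
      exact (succ_iff.mp hP h hh).comp_add_right g

theorem fwdDiff {d : ℕ} {P : G → K} (hP : IsPolyDegNat H d P) (g : G) :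
    IsPolyDegNat H d (Δ_[g] P) :=
  (hP.comp_add_right g).sub hP

theorem sup {H₁ H₂ : AddSubgroup G} {a b : ℕ} {P : G → K} (hP₁ : IsPolyDegNat H₁ (a + 1) P)
    (hP₂ : IsPolyDegNat H₂ (b + 1) P) : IsPolyDegNat (H₁ ⊔ H₂) (a + b + 1) P := by
  refine succ_iff.mpr fun h hh ↦ ?_
  obtain ⟨g₁, hg₁, g₂, hg₂, rfl⟩ := AddSubgroup.mem_sup.mp hh
  have hΔ₁ : IsPolyDegNat (H₁ ⊔ H₂) (a + b) (Δ_[g₁] P) := by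
    have hΔ₁P := succ_iff.mp hP₁ g₁ hg₁
    cases a with
    | zero => rw [show Δ_[g₁] P = 0 from hΔ₁P]; exact zero _
    | succ a => rw [Nat.add_right_comm]; exact sup hΔ₁P (hP₂.fwdDiff g₁)
  have hΔ₂ : IsPolyDegNat (H₁ ⊔ H₂) (a + b) (Δ_[g₂] P) := by
    have hΔ₂P := succ_iff.mp hP₂ g₂ hg₂
    cases b with
    | zero => rw [show Δ_[g₂] P = 0 from hΔ₂P]; exact zero _
    | succ b => exact sup (hP₁.fwdDiff g₂) hΔ₂P
  rw [fwdDiff_add_eq_comp_add_add]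
  exact (hΔ₁.comp_add_right g₂).add hΔ₂
termination_by a + b

end IsPolyDegNat

section IsPolyDeg

variable {G K : Type*} [AddCommGroup G] [AddCommGroup K] {H : AddSubgroup G}

theorem IsPolyDeg.eq_zero_of_nonpos {d : ℤ} {P : G → K} (hP : IsPolyDeg H d P) (hd : d ≤ 0) :
    P = 0 := by
  rwa [IsPolyDeg, if_pos hd] at hP

theorem isPolyDeg_zero (d : ℤ) : IsPolyDeg H d (0 : G → K) := by
  unfold IsPolyDeg
  split_ifs
  exacts [rfl, IsPolyDegNat.zero _]

theorem isPolyDeg_natCast_add_one_iff {n : ℕ} {P : G → K} :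
    IsPolyDeg H (n + 1) P ↔ IsPolyDegNat H (n + 1) P := by
  rw [IsPolyDeg, if_neg (by omega)]
  rfl

end IsPolyDeg

/-- **Concatenation theorem for polynomials** (Proposition 1.2): if `P` is a polynomial
of degree `< d₁` along `H₁` and of degree `< d₂` along `H₂`, then `P` is a polynomial of
degree `< d₁ + d₂ - 1` along `H₁ + H₂`. -/
theorem concat_poly {G K : Type*} [AddCommGroup G] [AddCommGroup K]
    (P : G → K) (H₁ H₂ : AddSubgroup G) (d₁ d₂ : ℤ)
    (h₁ : IsPolyDeg H₁ d₁ P) (h₂ : IsPolyDeg H₂ d₂ P) :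
    IsPolyDeg (H₁ ⊔ H₂) (d₁ + d₂ - 1) P := by
  rcases le_or_gt d₁ 0 with hd₁ | hd₁
  · rw [h₁.eq_zero_of_nonpos hd₁]; exact isPolyDeg_zero _
  rcases le_or_gt d₂ 0 with hd₂ | hd₂
  · rw [h₂.eq_zero_of_nonpos hd₂]; exact isPolyDeg_zero _
  obtain ⟨a, rfl⟩ : ∃ a : ℕ, d₁ = a + 1 := ⟨d₁.toNat - 1, by omega⟩
  obtain ⟨b, rfl⟩ : ∃ b : ℕ, d₂ = b + 1 := ⟨d₂.toNat - 1, by omega⟩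
  rw [isPolyDeg_natCast_add_one_iff] at h₁ h₂
  rw [show (a + 1 : ℤ) + (b + 1) - 1 = ((a + b : ℕ) : ℤ) + 1 by push_cast; ring,
    isPolyDeg_natCast_add_one_iff]
  exact h₁.sup h₂
end

section
/- Let P: G → K be a function between additive (abelian) groups, let d₁, d₂ be non-negative integers, and let H_{1,1},…,H_{1,d₁}, H_{2,1},…,H_{2,d₂} be subgroups of G. If P has rank <(H_{1,i})_{1≤i≤d₁} and P has rank <(H_{2,j})_{1≤j≤d₂}, then P has rank <(H_{1,i}+H_{2,j})_{1≤i≤d₁, 1≤j≤d₂}, the d₁·d₂ subgroups H_{1,i}+H_{2,j} listed in lexicographic order of (i,j). -/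
/-!
For `h = y + z` with `y ∈ H_{1,i}` and `z ∈ H_{2,j}`,
`P(x + h) - P(x) = (P(x + y) - P(x)) + (P(x + y + z) - P(x + y))`.
Discrete derivatives and translates do not increase rank, so the first summand has rank
`< (H_{1,i'})_{i' ≠ i}` and `< (H_{2,j'})_{j'}`, the second has rank `< (H_{1,i'})_{i'}` and
`< (H_{2,j'})_{j' ≠ j}`; by induction both have rank `< (H_{1,i'} + H_{2,j'})` over all pairs
other than `(i, j)`. To make this reindexing free, rank is taken with respect to a finset of
indices, where dropping an index is `Finset.erase`.
-/

/-- `P : G → K` has rank `< (H₁,…,H_d)`, for a tuple of `d` subgroups of `G`: for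
`d = 0` this means `P` is identically zero, and for `d ≥ 1` it means that for every
index `i` and every `h ∈ H_i` there is a function `P_h` of rank
`< (H₁,…,H_{i-1},H_{i+1},…,H_d)` with `P(x+h) = P(x) + P_h(x)` for all `x`. -/
def IsRankLt {G K : Type*} [AddCommGroup G] [AddCommGroup K] :
    (d : ℕ) → (Fin d → AddSubgroup G) → (G → K) → Prop
  | 0, _, P => P = 0
  | d + 1, H, P => ∀ i : Fin (d + 1), ∀ h ∈ H i, ∃ Ph : G → K,
      IsRankLt d (fun j => H (i.succAbove j)) Ph ∧ ∀ x : G, P (x + h) = P x + Ph x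

open Finset

section

variable {G K ι κ : Type*} [AddCommGroup G] [AddCommGroup K] [DecidableEq ι] [DecidableEq κ]

def IsRankLtOn (H : ι → AddSubgroup G) (s : Finset ι) (P : G → K) : Prop :=
  if s = ∅ then P = 0 else
    ∀ i ∈ s, ∀ h ∈ H i, ∃ Ph : G → K,
      IsRankLtOn H (s.erase i) Ph ∧ ∀ x, P (x + h) = P x + Ph x
termination_by s.card
decreasing_by exact card_erase_lt_of_mem ‹_›

namespace IsRankLtOn

variable {H : ι → AddSubgroup G} {s t : Finset ι} {P Q : G → K}

theorem empty_iff : IsRankLtOn H ∅ P ↔ P = 0 := by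
  rw [IsRankLtOn, if_pos rfl]

theorem iff_of_nonempty (hs : s.Nonempty) :
    IsRankLtOn H s P ↔ ∀ i ∈ s, ∀ h ∈ H i, ∃ Ph : G → K,
      IsRankLtOn H (s.erase i) Ph ∧ ∀ x, P (x + h) = P x + Ph x := by
  rw [IsRankLtOn, if_neg hs.ne_empty]

theorem add (hP : IsRankLtOn H s P) (hQ : IsRankLtOn H s Q) : IsRankLtOn H s (P + Q) := by
  induction s using Finset.strongInduction generalizing P Q with
  | H s ih =>
  rcases s.eq_empty_or_nonempty with rfl | hs
  · rw [empty_iff] at *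
    simp [hP, hQ]
  rw [iff_of_nonempty hs] at *
  intro i hi h hh
  obtain ⟨Ph, hPh, hP⟩ := hP i hi h hh
  obtain ⟨Qh, hQh, hQ⟩ := hQ i hi h hh
  refine ⟨Ph + Qh, ih _ (erase_ssubset hi) hPh hQh, fun x => ?_⟩
  simp only [Pi.add_apply, hP, hQ]
  abel

theorem sub (hP : IsRankLtOn H s P) (hQ : IsRankLtOn H s Q) : IsRankLtOn H s (P - Q) := by
  induction s using Finset.strongInduction generalizing P Q with
  | H s ih =>
  rcases s.eq_empty_or_nonempty with rfl | hs
  · rw [empty_iff] at *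
    simp [hP, hQ]
  rw [iff_of_nonempty hs] at *
  intro i hi h hh
  obtain ⟨Ph, hPh, hP⟩ := hP i hi h hh
  obtain ⟨Qh, hQh, hQ⟩ := hQ i hi h hh
  refine ⟨Ph - Qh, ih _ (erase_ssubset hi) hPh hQh, fun x => ?_⟩
  simp only [Pi.sub_apply, hP, hQ]
  abel

theorem comp_add_right (hP : IsRankLtOn H s P) (a : G) : IsRankLtOn H s (fun x => P (x + a)) := by
  induction s using Finset.strongInduction generalizing P with
  | H s ih =>
  rcases s.eq_empty_or_nonempty with rfl | hs
  · rw [empty_iff] at *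
    subst hP
    rfl
  rw [iff_of_nonempty hs] at *
  intro i hi h hh
  obtain ⟨Ph, hPh, hP⟩ := hP i hi h hh
  refine ⟨fun x => Ph (x + a), ih _ (erase_ssubset hi) hPh, fun x => ?_⟩
  rw [add_right_comm, hP]

theorem sub_comp_add_right (hP : IsRankLtOn H s P) (a : G) :
    IsRankLtOn H s (fun x => P (x + a) - P x) :=
  (hP.comp_add_right a).sub hP

theorem mono (hst : s ⊆ t) (hP : IsRankLtOn H s P) : IsRankLtOn H t P := by
  induction t using Finset.strongInduction generalizing s P with
  | H t ih =>
  rcases t.eq_empty_or_nonempty with rfl | ht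
  · rwa [subset_empty.mp hst] at hP
  rw [iff_of_nonempty ht]
  intro i hi h hh
  by_cases his : i ∈ s
  · obtain ⟨Ph, hPh, hP⟩ := (iff_of_nonempty ⟨i, his⟩).mp hP i his h hh
    exact ⟨Ph, ih _ (erase_ssubset hi) (erase_subset_erase i hst) hPh, hP⟩
  · refine ⟨fun x => P (x + h) - P x,
      ih _ (erase_ssubset hi) ?_ (hP.sub_comp_add_right h), fun x => (add_sub_cancel _ _).symm⟩
    exact fun j hj => mem_erase.mpr ⟨fun hji => his (hji ▸ hj), hst hj⟩

theorem prod {H₁ : ι → AddSubgroup G} {H₂ : κ → AddSubgroup G} {s : Finset ι} {t : Finset κ}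
    (h₁ : IsRankLtOn H₁ s P) (h₂ : IsRankLtOn H₂ t P) :
    IsRankLtOn (fun p : ι × κ => H₁ p.1 ⊔ H₂ p.2) (s ×ˢ t) P := by
  induction s using Finset.strongInduction generalizing t P with
  | H s ihs =>
  induction t using Finset.strongInduction generalizing P with
  | H t iht =>
  rcases (s ×ˢ t).eq_empty_or_nonempty with hst | hst
  · rw [hst, empty_iff]
    rcases product_eq_empty.mp hst with rfl | rfl
    exacts [empty_iff.mp h₁, empty_iff.mp h₂]
  obtain ⟨hs, ht⟩ := nonempty_product.mp hst
  rw [iff_of_nonempty hst]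
  rintro ⟨i, j⟩ hij h hh
  obtain ⟨hi, hj⟩ := mem_product.mp hij
  obtain ⟨y, hy, z, hz, rfl⟩ := AddSubgroup.mem_sup.mp hh
  obtain ⟨Py, hPy_s, hPy⟩ := (iff_of_nonempty hs).mp h₁ i hi y hy
  obtain ⟨Qz, hQz_t, hQz⟩ := (iff_of_nonempty ht).mp h₂ j hj z hz
  have hPy_eq : Py = fun x => P (x + y) - P x := funext fun x => eq_sub_of_add_eq' (hPy x).symm
  have hQz_eq : Qz = fun x => P (x + z) - P x := funext fun x => eq_sub_of_add_eq' (hQz x).symm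
  have hPy_prod := ihs _ (erase_ssubset hi) hPy_s (hPy_eq ▸ h₂.sub_comp_add_right y)
  have hQz_prod := iht _ (erase_ssubset hj) (hQz_eq ▸ h₁.sub_comp_add_right z) hQz_t
  refine ⟨Py + fun x => Qz (x + y),
    (hPy_prod.mono fun p => by grind).add ((hQz_prod.comp_add_right y).mono fun p => by grind),
    fun x => ?_⟩
  rw [← add_assoc, hQz, hPy, Pi.add_apply, add_assoc]

end IsRankLtOn

theorem Fin.map_univ_erase {d : ℕ} (e : Fin (d + 1) ↪ ι) (i : Fin (d + 1)) :
    (univ.map e).erase (e i) = univ.map (i.succAboveEmb.trans e) := by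
  rw [← map_erase, Fin.univ_succAbove d i, erase_cons, map_map]

theorem isRankLt_iff_isRankLtOn (H : ι → AddSubgroup G) {d : ℕ} (e : Fin d ↪ ι) (P : G → K) :
    IsRankLt d (fun k => H (e k)) P ↔ IsRankLtOn H (univ.map e) P := by
  induction d generalizing P with
  | zero =>
    rw [univ_eq_empty, map_empty, IsRankLtOn.empty_iff]
    rfl
  | succ d ih =>
    rw [IsRankLtOn.iff_of_nonempty (univ_nonempty.map), forall_mem_map]
    simp only [mem_univ, true_implies]
    refine forall_congr' fun i => forall₂_congr fun h _ => exists_congr fun Ph => and_congr_left' ?_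
    rw [Fin.map_univ_erase, ← ih]
    rfl

end

/-- **Concatenation theorem for low rank functions** (Proposition 1.5): if `P` has rank
`< (H_{1,i})_{1≤i≤d₁}` and rank `< (H_{2,j})_{1≤j≤d₂}`, then `P` has rank
`< (H_{1,i} + H_{2,j})_{1≤i≤d₁,1≤j≤d₂}`, the `d₁·d₂` subgroups `H_{1,i} + H_{2,j}`
listed in lexicographic order of `(i,j)` (the pair `(i,j)` is encoded as
`k = i·d₂ + j`, i.e. `i = k / d₂`, `j = k % d₂`). -/
theorem concat_low_rank {G K : Type*} [AddCommGroup G] [AddCommGroup K]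
    (P : G → K) (d₁ d₂ : ℕ)
    (H₁ : Fin d₁ → AddSubgroup G) (H₂ : Fin d₂ → AddSubgroup G)
    (h₁ : IsRankLt d₁ H₁ P) (h₂ : IsRankLt d₂ H₂ P) :
    IsRankLt (d₁ * d₂)
      (fun k : Fin (d₁ * d₂) =>
        H₁ ⟨k.1 / d₂, Nat.div_lt_of_lt_mul (by rw [Nat.mul_comm d₂ d₁]; exact k.2)⟩ ⊔
        H₂ ⟨k.1 % d₂, Nat.mod_lt _ (by
          rcases Nat.eq_zero_or_pos d₂ with h | h
          · exact absurd k.2 (by simp [h])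
          · exact h)⟩) P := by
  have hP₁ := (isRankLt_iff_isRankLtOn H₁ (.refl _) P).mp h₁
  have hP₂ := (isRankLt_iff_isRankLtOn H₂ (.refl _) P).mp h₂
  have hP := hP₁.prod hP₂
  rw [map_refl, map_refl, univ_product_univ, ← map_univ_equiv finProdFinEquiv.symm] at hP
  exact (isRankLt_iff_isRankLtOn _ _ P).mpr hP
end

section
/- Let G be an at most countable additive group, let (X,T) be a G-system with X=(X,ℬ,μ), let H be a subgroup of G, and let f ∈ L²(X). Let ℬ^H denote the σ-algebra of all E ∈ ℬ such that μ(T^h E Δ E) = 0 for every h ∈ H. Then the net Q ↦ 𝔼_{a∈Q} T^a f, indexed by the directed set 𝓕[H], converges in L²(X) norm to the conditional expectation 𝔼(f | ℬ^H). -/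
open MeasureTheory

/-- The average `𝔼_{a∈Q} f(a)` of a function over a finite multiset,
counted with multiplicity. -/
noncomputable def mAvg {α : Type*} (Q : Multiset α) (f : α → ℂ) : ℂ :=
  (Q.map f).sum / (Q.card : ℂ)

/-- The sumset `A + B` of two finite multisets, counted with multiplicity. -/
def msetSum {G : Type*} [AddCommGroup G] (A B : Multiset G) : Multiset G :=
  A.bind fun a => B.map fun b => a + b

/-- The iterated average `𝔼_{h₁∈Q₁,…,h_d∈Q_d} F(h₁,…,h_d)`. -/
noncomputable def multiAvg {G : Type*} :
    {d : ℕ} → (Fin d → Multiset G) → ((Fin d → G) → ℂ) → ℂ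
  | 0, _, F => F fun i => i.elim0
  | _ + 1, Q, F => mAvg (Q 0) fun a => multiAvg (fun i => Q i.succ) fun t => F (Fin.cons a t)

/-- A `G`-system: a probability space with separable `L²`, together with an
action of the additive group `G` by invertible measure-preserving maps. -/
structure GSystem (G : Type*) [AddCommGroup G] (X : Type*) [MeasurableSpace X] where
  μ : Measure X
  isProb : IsProbabilityMeasure μ
  separableL2 : TopologicalSpace.SeparableSpace (Lp ℂ 2 μ)
  T : G → X → X
  measurePreserving : ∀ g : G, MeasurePreserving (T g) μ μ
  T_zero : T 0 = id
  T_add : ∀ g h : G, T (g + h) = T g ∘ T h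

namespace GSystem

variable {G : Type*} [AddCommGroup G] {X : Type*} [MeasurableSpace X]

/-- `T^g f := f ∘ T^{-g}`. -/
def act (sys : GSystem G X) (g : G) (f : X → ℂ) : X → ℂ := fun x => f (sys.T (-g) x)

/-- `Δ_{h,h'} f := (T^h f) ⬝ conj(T^{h'} f)`. -/
def delta (sys : GSystem G X) (h h' : G) (f : X → ℂ) : X → ℂ :=
  fun x => sys.act h f x * star (sys.act h' f x)

/-- The iterated operator `Δ_{h₁,h'₁} ⋯ Δ_{h_d,h'_d}`. -/
def deltaIter (sys : GSystem G X) :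
    {d : ℕ} → (Fin d → G) → (Fin d → G) → (X → ℂ) → (X → ℂ)
  | 0, _, _, f => f
  | _ + 1, h, h', f =>
      sys.deltaIter (fun i => h i.succ) (fun i => h' i.succ) (sys.delta (h 0) (h' 0) f)

/-- The Gowers box seminorm `‖f‖_{□^d_{Q₁,…,Q_d}(X)}`, i.e. the `2^d`-th root of
`𝔼_{h_i,h'_i∈Q_i} ∫ Δ_{h₁,h'₁}⋯Δ_{h_d,h'_d} f dμ`. -/
noncomputable def gowersBox (sys : GSystem G X) {d : ℕ} (Q : Fin d → Multiset G)
    (f : X → ℂ) : ℝ :=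
  (multiAvg Q fun h => multiAvg Q fun h' => ∫ x, sys.deltaIter h h' f x ∂sys.μ).re
    ^ (((2 : ℝ) ^ d)⁻¹)

/-- The Gowers uniformity norm `‖f‖_{U^d_Q(X)} = ‖f‖_{□^d_{Q,…,Q}(X)}`. -/
noncomputable def gowersU (sys : GSystem G X) (d : ℕ) (Q : Multiset G) (f : X → ℂ) : ℝ :=
  sys.gowersBox (fun _ : Fin d => Q) f

end GSystem
section Accessors

variable {G X : Type*} [AddCommGroup G]

/-- The measure of a `G`-system, with the underlying σ-algebra made explicit. -/
noncomputable def GSystem.mu (m0 : MeasurableSpace X) (sys : @GSystem G _ X m0) :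
    @MeasureTheory.Measure X m0 := sys.μ

/-- The shift maps of a `G`-system, with the underlying σ-algebra made explicit. -/
def GSystem.shift (m0 : MeasurableSpace X) (sys : @GSystem G _ X m0) (g : G) : X → X :=
  sys.T g

/-- The Gowers box seminorm, with the underlying σ-algebra made explicit. -/
noncomputable def GSystem.box (m0 : MeasurableSpace X) (sys : @GSystem G _ X m0)
    {d : ℕ} (Q : Fin d → Multiset G) (f : X → ℂ) : ℝ :=
  sys.gowersBox Q f

end Accessors

/-- `Q` is a non-empty finite multiset with all elements in the subgroup `H`,
i.e. `Q ∈ 𝓕[H]`. -/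
def inF {G : Type*} [AddCommGroup G] (H : AddSubgroup G) (Q : Multiset G) : Prop :=
  Q ≠ 0 ∧ ∀ x ∈ Q, x ∈ H

/-- The ordering on `𝓕[H]`: `Q ≤ Q'` iff `Q' = Q + R` for some non-empty finite
multiset `R` in `H`. -/
def Fle {G : Type*} [AddCommGroup G] (H : AddSubgroup G) (Q Q' : Multiset G) : Prop :=
  ∃ R : Multiset G, inF H R ∧ Q' = msetSum Q R

/-- Convergence, to the limit `L`, of a net indexed by the product directed set
`𝓕[H₁] × ⋯ × 𝓕[H_d]`. -/
def BoxTendsto {G : Type*} [AddCommGroup G] {E : Type*} [Norm E] [Sub E] {d : ℕ}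
    (H : Fin d → AddSubgroup G) (val : (Fin d → Multiset G) → E) (L : E) : Prop :=
  ∀ ε : ℝ, 0 < ε → ∃ Q₀ : Fin d → Multiset G, (∀ i, inF (H i) (Q₀ i)) ∧
    ∀ Q : Fin d → Multiset G, (∀ i, inF (H i) (Q i)) → (∀ i, Fle (H i) (Q₀ i) (Q i)) →
      ‖val Q - L‖ ≤ ε

/-- The sub-σ-algebra `Z` is `G`-invariant. -/
def Invariant {G X : Type*} [AddCommGroup G] (m0 : MeasurableSpace X)
    (sys : @GSystem G _ X m0) (Z : MeasurableSpace X) : Prop :=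
  ∀ g : G, ∀ s : Set X, MeasurableSet[Z] s → MeasurableSet[Z] (GSystem.shift m0 sys g ⁻¹' s)

/-- Measurability of a function with respect to a given σ-algebra on `X`. -/
def MeasurableWrt {X : Type*} (Z : MeasurableSpace X) (g : X → ℂ) : Prop :=
  @Measurable X ℂ Z _ g

/-- `f ∈ L^∞(X)`: `f` is measurable and (essentially) bounded. -/
def BddMeas {G X : Type*} [AddCommGroup G] (m0 : MeasurableSpace X)
    (sys : @GSystem G _ X m0) (f : X → ℂ) : Prop :=
  @Measurable X ℂ m0 _ f ∧ ∃ C : ℝ, ∀ᵐ x ∂(GSystem.mu m0 sys), ‖f x‖ ≤ C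

/-- `f` belongs to `L^∞(Z)`: it is a.e. equal to a `Z`-measurable function. -/
def AEIn {X : Type*} {m0 : MeasurableSpace X} (μ : @MeasureTheory.Measure X m0)
    (Z : MeasurableSpace X) (f : X → ℂ) : Prop :=
  ∃ g : X → ℂ, MeasurableWrt Z g ∧ f =ᵐ[μ] g

/-- A `G`-invariant sub-σ-algebra `Z ⊆ ℬ` is characteristic for `□^d_{H₁,…,H_d}` on
`(X,T)`: for every `f ∈ L^∞(X)` the Gowers–Host–Kra seminorm
`‖f‖_{□^d_{H₁,…,H_d}(X)} = lim_{(Q₁,…,Q_d)→(H₁,…,H_d)} ‖f‖_{□^d_{Q₁,…,Q_d}(X)}`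
vanishes if and only if `𝔼(f|Z) = 0`. -/
def IsCharacteristicBox {G X : Type*} [AddCommGroup G] (m0 : MeasurableSpace X)
    (sys : @GSystem G _ X m0) {d : ℕ} (H : Fin d → AddSubgroup G)
    (Z : MeasurableSpace X) : Prop :=
  Z ≤ m0 ∧ Invariant m0 sys Z ∧
    ∀ f : X → ℂ, BddMeas m0 sys f →
      (BoxTendsto H (fun Q => GSystem.box m0 sys Q f) (0 : ℝ) ↔
        MeasureTheory.condExp Z (GSystem.mu m0 sys) f =ᵐ[GSystem.mu m0 sys] 0)

/-!
The Koopman operators `T^a` are commuting contractions of `L²(X)`. A vector orthogonal to every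
coboundary `T^h u - u` (`h ∈ H`) is `H`-invariant, since then `⟪T^h x, x⟫ = ‖x‖²` while
`‖T^h x‖ ≤ ‖x‖`; so `L²(X)` is the sum of the `H`-invariant vectors, which every average over
`Q ∈ 𝓕[H]` fixes, and the closed span of the coboundaries. Averages of `T^h u - u` tend to `0`:
every `Q ≥ P` is `P + R`, and averaging over the progression `P = {0, h, …, (N-1)h}` first
telescopes to a vector of norm at most `2‖u‖/N`. The averages are uniformly bounded, so this
passes to the closed span. Finally the orthogonal projection onto invariant vectors is `𝔼(·|ℬ^H)`:
indicators of sets in `ℬ^H` are invariant, and invariant functions are `ℬ^H`-measurable.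
-/

open Filter Topology

section Multisets

variable {G : Type*} [AddCommGroup G] {H : AddSubgroup G} {Q Q₀ Q₁ R : Multiset G}

theorem card_msetSum (A B : Multiset G) : (msetSum A B).card = A.card * B.card := by
  simp [msetSum, Multiset.card_bind, Multiset.map_const']

theorem msetSum_comm (A B : Multiset G) : msetSum A B = msetSum B A := by
  rw [msetSum, msetSum, Multiset.bind_map_comm]
  simp only [add_comm]

theorem msetSum_assoc (A B C : Multiset G) :
    msetSum (msetSum A B) C = msetSum A (msetSum B C) := by
  simp only [msetSum, Multiset.map_bind, Multiset.bind_assoc, Multiset.bind_map,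
    Multiset.map_map, Function.comp_def, add_assoc]

theorem inF.msetSum (hQ : inF H Q) (hR : inF H R) : inF H (msetSum Q R) := by
  refine ⟨fun h0 => ?_, fun x hx => ?_⟩
  · have := card_msetSum Q R
    rw [h0, Multiset.card_zero, eq_comm, Nat.mul_eq_zero, Multiset.card_eq_zero,
      Multiset.card_eq_zero] at this
    exact this.elim hQ.1 hR.1
  · obtain ⟨a, ha, b, hb, rfl⟩ : ∃ a ∈ Q, ∃ b ∈ R, a + b = x := by
      simpa [_root_.msetSum] using hx
    exact H.add_mem (hQ.2 a ha) (hR.2 b hb)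

theorem Fle.of_msetSum_left (hQ₁ : inF H Q₁) (h : Fle H (msetSum Q₀ Q₁) Q) : Fle H Q₀ Q := by
  obtain ⟨R, hR, rfl⟩ := h
  exact ⟨msetSum Q₁ R, hQ₁.msetSum hR, msetSum_assoc _ _ _⟩

theorem Fle.inF (hQ₀ : inF H Q₀) (h : Fle H Q₀ Q) : inF H Q := by
  obtain ⟨R, hR, rfl⟩ := h
  exact hQ₀.msetSum hR

variable (H) in
/-- Convergence along this filter is convergence of nets indexed by the directed set `𝓕[H]`. -/
def multisetsAtTop : Filter (Multiset G) :=
  ⨅ Q₀ ∈ {Q | inF H Q}, 𝓟 {Q | Fle H Q₀ Q}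

theorem hasBasis_multisetsAtTop :
    (multisetsAtTop H).HasBasis (inF H) fun Q₀ => {Q | Fle H Q₀ Q} := by
  refine hasBasis_biInf_principal (fun Q₀ hQ₀ Q₁ hQ₁ => ?_) ⟨{0}, by simp [inF, H.zero_mem]⟩
  refine ⟨msetSum Q₀ Q₁, hQ₀.msetSum hQ₁, fun Q hQ => hQ.of_msetSum_left hQ₁,
    fun Q (hQ : Fle H _ Q) => ?_⟩
  rw [msetSum_comm] at hQ
  exact hQ.of_msetSum_left hQ₀

theorem eventually_inF_multisetsAtTop : ∀ᶠ Q in multisetsAtTop H, inF H Q := by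
  obtain ⟨Q₀, hQ₀⟩ : ∃ Q₀, inF H Q₀ := ⟨{0}, by simp [inF, H.zero_mem]⟩
  exact hasBasis_multisetsAtTop.eventually_iff.2 ⟨Q₀, hQ₀, fun Q hQ => hQ.inF hQ₀⟩

end Multisets

section Averages

variable {G : Type*} {𝕜 E : Type*} [RCLike 𝕜] [NormedAddCommGroup E]
  [NormedSpace 𝕜 E] (U : G → E →L[𝕜] E)

/-- `𝔼_{a∈Q} U a`. For `Q = 0` this is `0`, as `(0 : 𝕜)⁻¹ = 0`. -/
noncomputable def multisetAverage (Q : Multiset G) : E →L[𝕜] E :=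
  (Q.card : 𝕜)⁻¹ • (Q.map U).sum

theorem multisetAverage_apply (Q : Multiset G) (g : E) :
    multisetAverage U Q g = (Q.card : 𝕜)⁻¹ • (Q.map fun a => U a g).sum := by
  simpa [multisetAverage, Multiset.map_map, Function.comp_def] using
    congrArg ((Q.card : 𝕜)⁻¹ • ·) (map_multiset_sum (ContinuousLinearMap.apply 𝕜 E g) (Q.map U))

theorem norm_multisetAverage_le (hU : ∀ a, ‖U a‖ ≤ 1) (Q : Multiset G) :
    ‖multisetAverage U Q‖ ≤ 1 := by
  rcases Q.empty_or_exists_mem with rfl | ⟨a, ha⟩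
  · simp [multisetAverage]
  have hcard : (0 : ℝ) < Q.card := by exact_mod_cast Multiset.card_pos_iff_exists_mem.2 ⟨a, ha⟩
  have hsum : ‖(Q.map U).sum‖ ≤ Q.card := by
    refine (norm_multiset_sum_le _).trans ?_
    simpa using Multiset.sum_le_card_nsmul (Q.map fun a => ‖U a‖) 1
      (by simpa using fun a _ => hU a)
  rw [multisetAverage, norm_smul, norm_inv, RCLike.norm_natCast]
  exact (inv_mul_le_one₀ hcard).2 hsum

theorem multisetAverage_apply_of_forall_eq {Q : Multiset G} (hQ : Q ≠ 0) {g : E}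
    (hg : ∀ a ∈ Q, U a g = g) : multisetAverage U Q g = g := by
  have hcard : (Q.card : 𝕜) ≠ 0 := by simpa using hQ
  rw [multisetAverage_apply, Multiset.map_congr rfl hg, Multiset.map_const',
    Multiset.sum_replicate, ← Nat.cast_smul_eq_nsmul 𝕜, smul_smul, inv_mul_cancel₀ hcard, one_smul]

variable [AddCommGroup G]

theorem multisetAverage_msetSum (hU_add : ∀ a b, U (a + b) = U a * U b) (Q R : Multiset G) :
    multisetAverage U (msetSum Q R) = multisetAverage U Q * multisetAverage U R := by
  have hsum : ((msetSum Q R).map U).sum = (Q.map U).sum * (R.map U).sum := by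
    simp only [msetSum, Multiset.map_bind, Multiset.sum_bind, Multiset.map_map,
      Function.comp_def, hU_add, Multiset.sum_map_mul_left, Multiset.sum_map_mul_right]
  rw [multisetAverage, multisetAverage, multisetAverage, hsum, card_msetSum, smul_mul_smul,
    Nat.cast_mul, mul_inv]

theorem multisetAverage_range_nsmul_sub (hU_add : ∀ a b, U (a + b) = U a * U b) (h : G)
    (u : E) (N : ℕ) :
    multisetAverage U ((Multiset.range N).map (· • h)) (U h u - u)
      = (N : 𝕜)⁻¹ • (U (N • h) u - U 0 u) := by
  have hstep : ∀ k : ℕ, U (k • h) (U h u - u) = U ((k + 1) • h) u - U (k • h) u := by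
    intro k
    rw [map_sub, succ_nsmul, hU_add]
    rfl
  rw [multisetAverage_apply, Multiset.card_map, Multiset.card_range, Multiset.map_map,
    Function.comp_def, Multiset.map_congr rfl fun k _ => hstep k]
  congr 1
  exact Finset.sum_range_sub (fun k => U (k • h) u) N |>.trans (by rw [zero_smul])

theorem norm_multisetAverage_range_nsmul_sub_le (hU : ∀ a, ‖U a‖ ≤ 1)
    (hU_add : ∀ a b, U (a + b) = U a * U b) (h : G) (u : E) (N : ℕ) :
    ‖multisetAverage U ((Multiset.range N).map (· • h)) (U h u - u)‖ ≤ 2 * ‖u‖ / N := by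
  have hcontr : ∀ a v, ‖U a v‖ ≤ ‖v‖ := fun a v => by
    simpa using (U a).le_of_opNorm_le (hU a) v
  rw [multisetAverage_range_nsmul_sub U hU_add, norm_smul, norm_inv, RCLike.norm_natCast,
    inv_mul_eq_div]
  gcongr
  linarith [norm_sub_le (U (N • h) u) (U 0 u), hcontr (N • h) u, hcontr 0 u]

end Averages

section FixedSubspace

variable {G : Type*} [AddCommGroup G] {𝕜 E : Type*} [RCLike 𝕜] [NormedAddCommGroup E]
  [NormedSpace 𝕜 E] (U : G → E →L[𝕜] E) (H : AddSubgroup G)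

def fixedSubspace : Submodule 𝕜 E where
  carrier := {g | ∀ h ∈ H, U h g = g}
  add_mem' hg hg' h hh := by rw [map_add, hg h hh, hg' h hh]
  zero_mem' _ _ := map_zero _
  smul_mem' c _ hg h hh := by rw [map_smul, hg h hh]

theorem isClosed_fixedSubspace : IsClosed (fixedSubspace U H : Set E) := by
  simp only [fixedSubspace, Submodule.coe_set_mk, AddSubmonoid.coe_set_mk,
    AddSubsemigroup.coe_set_mk, Set.ofPred_forall]
  exact isClosed_biInter fun h _ => isClosed_eq (U h).continuous continuous_id

def coboundaries : Set E := {w | ∃ h ∈ H, ∃ u, U h u - u = w}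

def averagesNullSubspace : Submodule 𝕜 E where
  carrier := {g | Tendsto (fun Q => multisetAverage U Q g) (multisetsAtTop H) (𝓝 0)}
  add_mem' hg hg' := by simpa using hg.add hg'
  zero_mem' := by simpa using tendsto_const_nhds
  smul_mem' c _ hg := by simpa using hg.const_smul c

variable {U H}

theorem isClosed_averagesNullSubspace (hU : ∀ a, ‖U a‖ ≤ 1) :
    IsClosed (averagesNullSubspace U H : Set E) := by
  have hlip : ∀ Q, LipschitzWith 1 (multisetAverage U Q) := fun Q =>
    (multisetAverage U Q).lipschitz.weaken (norm_multisetAverage_le U hU Q)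
  exact (LipschitzWith.uniformEquicontinuous _ 1 hlip).equicontinuous.isClosed_setOfPred_tendsto
    continuous_const

theorem coboundaries_subset_averagesNullSubspace (hU : ∀ a, ‖U a‖ ≤ 1)
    (hU_add : ∀ a b, U (a + b) = U a * U b) :
    coboundaries U H ⊆ averagesNullSubspace U H := by
  rintro _ ⟨h, hh, u, rfl⟩
  refine Metric.tendsto_nhds.2 fun ε hε => ?_
  obtain ⟨N, hN⟩ := exists_nat_gt (2 * ‖u‖ / ε)
  have hNpos : (0 : ℝ) < N := lt_of_le_of_lt (by positivity) hN
  set P := (Multiset.range N).map (· • h)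
  have hP : inF H P := by
    refine ⟨fun h0 => hNpos.ne' (by simpa [P] using congrArg Multiset.card h0), fun x hx => ?_⟩
    obtain ⟨k, -, rfl⟩ := Multiset.mem_map.1 hx
    exact H.nsmul_mem hh k
  have hsmall : ‖multisetAverage U P (U h u - u)‖ < ε := by
    refine (norm_multisetAverage_range_nsmul_sub_le U hU hU_add h u N).trans_lt ?_
    rwa [div_lt_iff₀ hε, ← div_lt_iff₀' hNpos] at hN
  refine hasBasis_multisetsAtTop.eventually_iff.2 ⟨P, hP, fun Q (hQ : Fle H P Q) => ?_⟩
  obtain ⟨R, hR, rfl⟩ := hQ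
  rw [dist_zero_right, msetSum_comm, multisetAverage_msetSum U hU_add, mul_apply_eq_comp]
  exact ((multisetAverage U R).le_of_opNorm_le (norm_multisetAverage_le U hU R) _).trans_lt
    (by simpa using hsmall)

end FixedSubspace

section InnerProductSpace

variable {G : Type*} [AddCommGroup G] {𝕜 E : Type*} [RCLike 𝕜] [NormedAddCommGroup E]
  [InnerProductSpace 𝕜 E] [CompleteSpace E] {U : G → E →L[𝕜] E} {H : AddSubgroup G}

/-- A contraction fixes every vector `x` with `⟪U y, x⟫ = ⟪y, x⟫` for all `y`, because then
`⟪U x, x⟫ = ‖x‖²` while `‖U x‖ ≤ ‖x‖`. -/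
theorem orthogonal_fixedSubspace_le (hU : ∀ a, ‖U a‖ ≤ 1) :
    (fixedSubspace U H)ᗮ ≤ (Submodule.span 𝕜 (coboundaries U H)).topologicalClosure := by
  rw [← Submodule.orthogonal_orthogonal_eq_closure]
  refine Submodule.orthogonal_le fun x hx h hh =>
    eq_of_norm_le_re_inner_eq_norm_sq (𝕜 := 𝕜) ?_ ?_
  · simpa using (U h).le_of_opNorm_le (hU h) x
  · have : ∀ y, inner 𝕜 (U h y) x = inner 𝕜 y x := fun y => by
      have := (Submodule.mem_orthogonal _ _).1 hx (U h y - y)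
        (Submodule.subset_span ⟨h, hh, y, rfl⟩)
      rwa [inner_sub_left, sub_eq_zero] at this
    simp [this]

theorem tendsto_multisetAverage_of_sub_mem_orthogonal (hU : ∀ a, ‖U a‖ ≤ 1)
    (hU_add : ∀ a b, U (a + b) = U a * U b) {g p : E} (hp : p ∈ fixedSubspace U H)
    (hgp : g - p ∈ (fixedSubspace U H)ᗮ) :
    Tendsto (fun Q => multisetAverage U Q g) (multisetsAtTop H) (𝓝 p) := by
  have hnull : g - p ∈ averagesNullSubspace U H :=
    Submodule.topologicalClosure_minimal _
      (Submodule.span_le.2 (coboundaries_subset_averagesNullSubspace hU hU_add))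
      (isClosed_averagesNullSubspace hU) (orthogonal_fixedSubspace_le hU hgp)
  have hfix : ∀ᶠ Q in multisetsAtTop H, multisetAverage U Q p = p :=
    eventually_inF_multisetsAtTop.mono fun Q hQ =>
      multisetAverage_apply_of_forall_eq U hQ.1 fun a ha => hp a (hQ.2 a ha)
  have := (tendsto_const_nhds (x := p)).congr' (hfix.mono fun _ h => h.symm)
  simpa using this.add hnull

end InnerProductSpace

theorem MeasureTheory.Lp.coeFn_multisetSum_map {α ι E : Type*} [MeasurableSpace α]
    [NormedAddCommGroup E] {p : ENNReal} {μ : Measure α} (Q : Multiset ι) (F : ι → Lp E p μ) :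
    ⇑(Q.map F).sum =ᵐ[μ] fun x => (Q.map fun i => F i x).sum := by
  induction Q using Multiset.induction with
  | empty => exact Lp.coeFn_zero E p μ
  | cons a Q ih =>
    rw [Multiset.map_cons, Multiset.sum_cons]
    filter_upwards [Lp.coeFn_add (F a) (Q.map F).sum, ih] with x hadd hQ
    rw [hadd, Pi.add_apply, hQ, Multiset.map_cons, Multiset.sum_cons]

namespace GSystem

variable {G : Type*} [AddCommGroup G] {X : Type*} {m m₀ : MeasurableSpace X}
  (sys : GSystem G X)

/-- The operator `T^a` on `L²(X)`. -/
noncomputable def koopman (a : G) : Lp ℂ 2 sys.μ →L[ℂ] Lp ℂ 2 sys.μ :=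
  (Lp.compMeasurePreservingₗᵢ ℂ (sys.T (-a)) (sys.measurePreserving (-a))).toContinuousLinearMap

theorem coeFn_koopman (a : G) (g : Lp ℂ 2 sys.μ) :
    ⇑(sys.koopman a g) =ᵐ[sys.μ] fun x => g (sys.T (-a) x) :=
  Lp.coeFn_compMeasurePreserving g _

theorem ae_eq_comp_T (a : G) {g g' : X → ℂ} (h : g =ᵐ[sys.μ] g') :
    (fun x => g (sys.T a x)) =ᵐ[sys.μ] fun x => g' (sys.T a x) :=
  (sys.measurePreserving a).quasiMeasurePreserving.ae_eq_comp h

theorem norm_koopman_le (a : G) : ‖sys.koopman a‖ ≤ 1 :=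
  LinearIsometry.norm_toContinuousLinearMap_le _

theorem koopman_add (a b : G) : sys.koopman (a + b) = sys.koopman a * sys.koopman b := by
  ext1 g
  refine Lp.ext ?_
  calc ⇑(sys.koopman (a + b) g) =ᵐ[sys.μ] fun x => g (sys.T (-b) (sys.T (-a) x)) := by
        simpa [neg_add_rev, sys.T_add] using sys.coeFn_koopman (a + b) g
    _ =ᵐ[sys.μ] fun x => sys.koopman b g (sys.T (-a) x) :=
        sys.ae_eq_comp_T (-a) (sys.coeFn_koopman b g).symm
    _ =ᵐ[sys.μ] ⇑(sys.koopman a (sys.koopman b g)) := (sys.coeFn_koopman a _).symm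

theorem coeFn_multisetAverage_koopman (Q : Multiset G) {f : X → ℂ} (hf : MemLp f 2 sys.μ) :
    ⇑(multisetAverage sys.koopman Q (hf.toLp f)) =ᵐ[sys.μ]
      fun x => mAvg Q fun a => f (sys.T (-a) x) := by
  have hterms : ∀ᵐ x ∂sys.μ, ∀ a ∈ Q, sys.koopman a (hf.toLp f) x = f (sys.T (-a) x) := by
    classical
    simp_rw [← Multiset.mem_toFinset]
    refine (ae_ball_iff Q.toFinset.countable_toSet).2 fun a _ => ?_
    exact (sys.coeFn_koopman a _).trans (sys.ae_eq_comp_T (-a) hf.coeFn_toLp)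
  rw [multisetAverage_apply]
  filter_upwards [Lp.coeFn_smul (Q.card : ℂ)⁻¹ (Q.map fun a => sys.koopman a (hf.toLp f)).sum,
    Lp.coeFn_multisetSum_map Q fun a => sys.koopman a (hf.toLp f), hterms]
    with x hsmul hsum hx
  rw [hsmul, Pi.smul_apply, hsum, Multiset.map_congr rfl hx, mAvg, smul_eq_mul, div_eq_inv_mul]

variable {sys} {H : AddSubgroup G}

theorem indicatorConstLp_mem_fixedSubspace {s : Set X} (hs : MeasurableSet s)
    (hμs : sys.μ s ≠ ⊤) (hinv : ∀ h ∈ H, sys.μ (symmDiff (sys.T h ⁻¹' s) s) = 0) (c : ℂ) :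
    indicatorConstLp 2 hs hμs c ∈ fixedSubspace sys.koopman H := by
  intro h hh
  have hset : sys.T (-h) ⁻¹' s =ᵐ[sys.μ] s :=
    measure_symmDiff_eq_zero_iff.1 (hinv (-h) (H.neg_mem hh))
  refine Lp.ext ?_
  calc ⇑(sys.koopman h (indicatorConstLp 2 hs _ c))
      =ᵐ[sys.μ] fun x => s.indicator (fun _ => c) (sys.T (-h) x) :=
        (sys.coeFn_koopman h _).trans (sys.ae_eq_comp_T (-h) indicatorConstLp_coeFn)
    _ = (sys.T (-h) ⁻¹' s).indicator fun _ => c := rfl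
    _ =ᵐ[sys.μ] s.indicator fun _ => c := indicator_ae_eq_of_ae_eq_set hset
    _ =ᵐ[sys.μ] _ := indicatorConstLp_coeFn.symm

theorem measurable_of_mem_fixedSubspace
    (hm : ∀ s : Set X, MeasurableSet[m] s ↔
      (MeasurableSet[m₀] s ∧ ∀ h ∈ H, sys.μ (symmDiff (sys.T h ⁻¹' s) s) = 0))
    {p : Lp ℂ 2 sys.μ} (hp : p ∈ fixedSubspace sys.koopman H) : Measurable[m] p := by
  intro t ht
  refine (hm _).2 ⟨(Lp.stronglyMeasurable p).measurable ht, fun h hh => ?_⟩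
  have hinv : (fun x => p (sys.T h x)) =ᵐ[sys.μ] p := by
    simpa [hp (-h) (H.neg_mem hh)] using (sys.coeFn_koopman (-h) p).symm
  exact measure_symmDiff_eq_zero_iff.2 (hinv.preimage t)

theorem condExp_ae_eq_of_mem_fixedSubspace
    (hm : ∀ s : Set X, MeasurableSet[m] s ↔
      (MeasurableSet[m₀] s ∧ ∀ h ∈ H, sys.μ (symmDiff (sys.T h ⁻¹' s) s) = 0))
    {f : X → ℂ} (hf : MemLp f 2 sys.μ) {p : Lp ℂ 2 sys.μ}
    (hp : p ∈ fixedSubspace sys.koopman H)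
    (hfp : hf.toLp f - p ∈ (fixedSubspace sys.koopman H)ᗮ) :
    sys.μ[f|m] =ᵐ[sys.μ] p := by
  have := sys.isProb
  have hle : m ≤ m₀ := fun s hs => ((hm s).1 hs).1
  have : IsFiniteMeasure (sys.μ.trim hle) := isFiniteMeasure_trim hle
  refine (ae_eq_condExp_of_forall_setIntegral_eq hle (hf.integrable one_le_two)
    (fun _ _ _ => ((Lp.memLp p).integrable one_le_two).integrableOn) (fun s hs _ => ?_)
    (measurable_of_mem_fixedSubspace hm hp).stronglyMeasurable.aestronglyMeasurable).symm
  have horth := (Submodule.mem_orthogonal _ _).1 hfp _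
    (indicatorConstLp_mem_fixedSubspace (hle s hs) (measure_ne_top _ _) ((hm s).1 hs).2 1)
  rw [inner_sub_right, sub_eq_zero, L2.inner_indicatorConstLp_one,
    L2.inner_indicatorConstLp_one] at horth
  rw [← horth]
  exact integral_congr_ae (ae_restrict_of_ae hf.coeFn_toLp)

theorem tendsto_eLpNorm_multisetAverage_sub_condExp
    (hm : ∀ s : Set X, MeasurableSet[m] s ↔
      (MeasurableSet[m₀] s ∧ ∀ h ∈ H, sys.μ (symmDiff (sys.T h ⁻¹' s) s) = 0))
    {f : X → ℂ} (hf : MemLp f 2 sys.μ) :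
    Tendsto
      (fun Q => eLpNorm (fun x => mAvg Q (fun a => f (sys.T (-a) x)) - sys.μ[f|m] x) 2 sys.μ)
      (multisetsAtTop H) (𝓝 0) := by
  set V := fixedSubspace sys.koopman H
  have : CompleteSpace V := (isClosed_fixedSubspace sys.koopman H).completeSpace_coe
  set p := V.starProjection (hf.toLp f)
  have hp : p ∈ V := V.starProjection_apply_mem _
  have hfp : hf.toLp f - p ∈ Vᗮ := V.sub_starProjection_mem_orthogonal _
  have hlim := tendsto_multisetAverage_of_sub_mem_orthogonal sys.norm_koopman_le
    sys.koopman_add hp hfp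
  have hcond := condExp_ae_eq_of_mem_fixedSubspace hm hf hp hfp
  have hnorm := (hlim.sub_const p).enorm
  rw [sub_self, enorm_zero] at hnorm
  refine hnorm.congr fun Q => ?_
  rw [Lp.enorm_def]
  refine eLpNorm_congr_ae ?_
  filter_upwards [sys.coeFn_multisetAverage_koopman Q hf, hcond,
    Lp.coeFn_sub (multisetAverage sys.koopman Q (hf.toLp f)) p]
    with x havg hcondx hsub
  rw [hsub, Pi.sub_apply, havg, hcondx]

end GSystem

theorem mean_ergodic_theorem_general {G : Type*} [AddCommGroup G]
    {X : Type*} [m0 : MeasurableSpace X] (sys : @GSystem G _ X m0)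
    (H : AddSubgroup G)
    (f : X → ℂ) (hf : MeasureTheory.MemLp f 2 (GSystem.mu m0 sys))
    (m : MeasurableSpace X)
    (hm : ∀ s : Set X, MeasurableSet[m] s ↔
      (MeasurableSet[m0] s ∧
        ∀ h ∈ H, GSystem.mu m0 sys (symmDiff (GSystem.shift m0 sys h ⁻¹' s) s) = 0)) :
    ∀ ε : ℝ, 0 < ε → ∃ Q₀ : Multiset G, inF H Q₀ ∧
      ∀ Q : Multiset G, inF H Q → Fle H Q₀ Q →
        MeasureTheory.eLpNorm
          (fun x => mAvg Q (fun a => f (GSystem.shift m0 sys (-a) x)) -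
            MeasureTheory.condExp m (GSystem.mu m0 sys) f x) 2 (GSystem.mu m0 sys)
          ≤ ENNReal.ofReal ε := by
  intro ε hε
  obtain ⟨Q₀, hQ₀, hclose⟩ :=
    (hasBasis_multisetsAtTop.tendsto_iff ENNReal.nhds_zero_basis_Iic).1
      (GSystem.tendsto_eLpNorm_multisetAverage_sub_condExp hm hf) _ (ENNReal.ofReal_pos.2 hε)
  exact ⟨Q₀, hQ₀, fun Q _ hQ => hclose Q hQ⟩

/-- **Mean ergodic theorem** (the identity (2.6)): for `f ∈ L²(X)`, the averages
`𝔼_{a∈Q} T^a f` converge, along the directed set `𝓕[H]` of non-empty finite multisets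
in `H`, in `L²(X)` norm to the conditional expectation `𝔼(f | ℬ^H)` relative to the
σ-algebra `ℬ^H` of sets `E ∈ ℬ` with `μ(T^h E Δ E) = 0` for all `h ∈ H`. -/
theorem mean_ergodic_theorem {G : Type*} [AddCommGroup G] [Countable G]
    {X : Type*} [m0 : MeasurableSpace X] (sys : @GSystem G _ X m0)
    (H : AddSubgroup G)
    (f : X → ℂ) (hf : MeasureTheory.MemLp f 2 (GSystem.mu m0 sys))
    (m : MeasurableSpace X)
    (hm : ∀ s : Set X, MeasurableSet[m] s ↔
      (MeasurableSet[m0] s ∧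
        ∀ h ∈ H, GSystem.mu m0 sys (symmDiff (GSystem.shift m0 sys h ⁻¹' s) s) = 0)) :
    ∀ ε : ℝ, 0 < ε → ∃ Q₀ : Multiset G, inF H Q₀ ∧
      ∀ Q : Multiset G, inF H Q → Fle H Q₀ Q →
        MeasureTheory.eLpNorm
          (fun x => mAvg Q (fun a => f (GSystem.shift m0 sys (-a) x)) -
            MeasureTheory.condExp m (GSystem.mu m0 sys) f x) 2 (GSystem.mu m0 sys)
          ≤ ENNReal.ofReal ε :=
  mean_ergodic_theorem_general (m0 := m0) sys H f hf m hm
end
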